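/- Generating function for φ_n^{(a,b)}: ∑_{n=0}^∞ φ_n^{(a,b)}(x,y|q) t^n/(q;q)_n = (1/(yt;q)_∞) · ∑_{n=0}^∞ ((a_1,…,a_{r+1};q)_n / ((q;q)_n (b_1,…,b_r;q)_n)) (xt)^n, valid for max{|xt|, |yt|} < 1. -/

import Mathlib

noncomputable def qPoch (x q : ℂ) (n : ℕ) : ℂ := ∏ j ∈ Finset.range n, (1 - x * q ^ j)

noncomputable def qPochInf (x q : ℂ) : ℂ := ∏' j : ℕ, (1 - x * q ^ j)

noncomputable def qBinom (q : ℂ) (n k : ℕ) : ℂ := qPoch q q n / (qPoch q q k * qPoch q q (n - k))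

noncomputable def Dq (q : ℂ) (f : ℂ → ℂ) : ℂ → ℂ := fun a => (f a - f (q * a)) / ((1 - q) * a)

noncomputable def Dqinv (q : ℂ) (f : ℂ → ℂ) : ℂ → ℂ := fun a => (f (q⁻¹ * a) - f a) / ((q⁻¹ - 1) * a)

noncomputable def mPoch {m : ℕ} (a : Fin m → ℂ) (q : ℂ) (k : ℕ) : ℂ := ∏ i, qPoch (a i) q k

noncomputable def phi {r : ℕ} (a : Fin (r + 1) → ℂ) (b : Fin r → ℂ) (q x y : ℂ) (n : ℕ) : ℂ :=
  ∑ k ∈ Finset.range (n + 1), qBinom q n k * (mPoch a q k / mPoch b q k) * x ^ k * y ^ (n - k)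

noncomputable def psi {r : ℕ} (a : Fin (r + 1) → ℂ) (b : Fin r → ℂ) (q x y : ℂ) (n : ℕ) : ℂ :=
  ∑ k ∈ Finset.range (n + 1), qBinom q n k * (mPoch a q k / mPoch b q k) *
    q ^ ((((k + 1).choose 2 : ℕ) : ℤ) - (n : ℤ) * (k : ℤ)) * x ^ k * y ^ (n - k)

/-!
The `n`-th coefficient of the left-hand side is a Cauchy product: since
`[n choose k]_q / (q;q)_n = 1 / ((q;q)_k (q;q)_{n-k})`, the generating function factors as
`(∑ (a;q)_n / ((q;q)_n (b;q)_n) (xt)^n) · e_q(yt)` with `e_q(z) = ∑ z^n / (q;q)_n`, both series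
converging absolutely by the ratio test. Euler's identity `e_q(z) = 1 / (z;q)_∞` comes from the
functional equation `e_q(qz) = (1 - z) e_q(z)`: iterating gives `(z;q)_N e_q(z) = e_q(q^N z)`,
and letting `N → ∞` the left side tends to `(z;q)_∞ e_q(z)`, the right side to `e_q(0) = 1`.
-/

open Filter Finset Topology

noncomputable def qExp (q z : ℂ) : ℂ := ∑' n : ℕ, z ^ n / qPoch q q n

lemma qPoch_succ (z q : ℂ) (n : ℕ) : qPoch z q (n + 1) = qPoch z q n * (1 - z * q ^ n) :=
  prod_range_succ _ _

lemma mPoch_succ {m : ℕ} (u : Fin m → ℂ) (q : ℂ) (n : ℕ) :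
    mPoch u q (n + 1) = mPoch u q n * ∏ i, (1 - u i * q ^ n) := by
  simp only [mPoch, qPoch_succ, prod_mul_distrib]

section

variable {q z : ℂ}

lemma norm_pow_mul_lt_one (hq : ‖q‖ ≤ 1) (hz : ‖z‖ < 1) (j : ℕ) : ‖q ^ j * z‖ < 1 := by
  rw [norm_mul, norm_pow]
  exact mul_lt_one_of_nonneg_of_lt_one_right (pow_le_one₀ (norm_nonneg q) hq) (norm_nonneg z) hz

lemma one_sub_mul_pow_ne_zero (hq : ‖q‖ ≤ 1) (hz : ‖z‖ < 1) (j : ℕ) : 1 - z * q ^ j ≠ 0 := by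
  have h := norm_pow_mul_lt_one hq hz j
  exact sub_ne_zero.mpr fun h1 => by rw [mul_comm, ← h1] at h; simp at h

lemma qPoch_ne_zero (hq : ‖q‖ ≤ 1) (hz : ‖z‖ < 1) (n : ℕ) : qPoch z q n ≠ 0 :=
  prod_ne_zero_iff.mpr fun j _ => one_sub_mul_pow_ne_zero hq hz j

lemma tendsto_one_sub_mul_pow (hq : ‖q‖ < 1) (w : ℂ) :
    Tendsto (fun n => 1 - w * q ^ n) atTop (𝓝 1) := by
  simpa using ((tendsto_pow_atTop_nhds_zero_of_norm_lt_one hq).const_mul w).const_sub 1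

lemma tendsto_prod_one_sub_mul_pow (hq : ‖q‖ < 1) {m : ℕ} (u : Fin m → ℂ) :
    Tendsto (fun n => ∏ i, (1 - u i * q ^ n)) atTop (𝓝 1) := by
  simpa using tendsto_finsetProd univ fun i _ => tendsto_one_sub_mul_pow hq (u i)

lemma summable_norm_of_succ_eq_mul {α : Type*} [NormedRing α] {c R : ℕ → α} {ρ : α}
    (hc : ∀ n, c (n + 1) = R n * c n) (hR : Tendsto R atTop (𝓝 ρ)) (hρ : ‖ρ‖ < 1) :
    Summable fun n => ‖c n‖ := by
  obtain ⟨r, hρr, hr⟩ := exists_between hρ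
  refine summable_of_ratio_norm_eventually_le hr ?_
  filter_upwards [hR.norm.eventually_le_const hρr] with n hn
  rw [norm_norm, norm_norm, hc]
  exact (norm_mul_le _ _).trans (mul_le_mul_of_nonneg_right hn (norm_nonneg _))

lemma summable_norm_mPoch_div (hq : ‖q‖ < 1) {m m' : ℕ} (u : Fin m → ℂ) (v : Fin m' → ℂ)
    (hz : ‖z‖ < 1) :
    Summable fun n => ‖mPoch u q n / (qPoch q q n * mPoch v q n) * z ^ n‖ := by
  refine summable_norm_of_succ_eq_mul
    (R := fun n => z * (∏ i, (1 - u i * q ^ n)) / ((1 - q * q ^ n) * ∏ i, (1 - v i * q ^ n)))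
    (fun n => ?_) ?_ hz
  · simp only [mPoch_succ, qPoch_succ, pow_succ, div_eq_mul_inv, mul_inv]
    ring
  · simpa [Pi.div_def] using ((tendsto_prod_one_sub_mul_pow hq u).const_mul z).div
      ((tendsto_one_sub_mul_pow hq q).mul (tendsto_prod_one_sub_mul_pow hq v)) (by simp)

lemma summable_norm_pow_div_qPoch (hq : ‖q‖ < 1) (hz : ‖z‖ < 1) :
    Summable fun n => ‖z ^ n / qPoch q q n‖ := by
  refine summable_norm_of_succ_eq_mul (R := fun n => z / (1 - q * q ^ n)) (fun n => ?_) ?_ hz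
  · rw [qPoch_succ, pow_succ, div_eq_mul_inv, div_eq_mul_inv, mul_inv]
    ring
  · simpa [Pi.div_def] using tendsto_const_nhds.div (tendsto_one_sub_mul_pow hq q) one_ne_zero

lemma qBinom_div_qPoch {n : ℕ} (k : ℕ) (hn : qPoch q q n ≠ 0) :
    qBinom q n k / qPoch q q n = (qPoch q q k * qPoch q q (n - k))⁻¹ :=
  div_div_cancel_left' hn

lemma phi_mul_pow_div_qPoch {r : ℕ} (a : Fin (r + 1) → ℂ) (b : Fin r → ℂ) (x y t : ℂ) {n : ℕ}
    (hn : qPoch q q n ≠ 0) :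
    phi a b q x y n * t ^ n / qPoch q q n
      = ∑ k ∈ range (n + 1), mPoch a q k / (qPoch q q k * mPoch b q k) * (x * t) ^ k
          * ((y * t) ^ (n - k) / qPoch q q (n - k)) := by
  rw [phi, sum_mul, sum_div]
  refine sum_congr rfl fun k hk => ?_
  have htn : t ^ n = t ^ k * t ^ (n - k) := by
    rw [← pow_add, Nat.add_sub_cancel' (mem_range_succ_iff.mp hk)]
  rw [htn]
  linear_combination (mPoch a q k / mPoch b q k * x ^ k * y ^ (n - k) * (t ^ k * t ^ (n - k)))
    * qBinom_div_qPoch k hn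

lemma qExp_mul_left (hq : ‖q‖ < 1) (hz : ‖z‖ < 1) : qExp q (q * z) = (1 - z) * qExp q z := by
  have hS := (summable_norm_pow_div_qPoch hq hz).of_norm
  have hqz : ‖q * z‖ < 1 := by simpa using norm_pow_mul_lt_one hq.le hz 1
  have hS' := (summable_norm_pow_div_qPoch hq hqz).of_norm
  have hdiff : qExp q z - qExp q (q * z) = z * qExp q z := by
    rw [qExp, qExp, ← hS.tsum_sub hS', (hS.sub hS').tsum_eq_zero_add, ← tsum_mul_left]
    simp only [pow_zero, sub_self, zero_add]
    refine tsum_congr fun n => ?_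
    have hne := one_sub_mul_pow_ne_zero hq.le hq n
    rw [qPoch_succ]
    field_simp
    ring
  linear_combination -hdiff

lemma qPoch_mul_qExp (hq : ‖q‖ < 1) (hz : ‖z‖ < 1) (N : ℕ) :
    qPoch z q N * qExp q z = qExp q (q ^ N * z) := by
  induction N with
  | zero => simp [qPoch]
  | succ N ih =>
    rw [pow_succ', mul_assoc, qExp_mul_left hq (norm_pow_mul_lt_one hq.le hz N), ← ih, qPoch_succ]
    ring

lemma tendsto_qExp_pow_mul (hq : ‖q‖ < 1) (hz : ‖z‖ < 1) :
    Tendsto (fun N => qExp q (q ^ N * z)) atTop (𝓝 1) := by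
  have h0 := (tendsto_pow_atTop_nhds_zero_of_norm_lt_one hq).mul_const z
  have hlim := tendsto_tsum_of_dominated_convergence (summable_norm_pow_div_qPoch hq hz)
    (fun n => (h0.pow n).div_const (qPoch q q n)) (Eventually.of_forall fun N n => ?_)
  · rwa [tsum_eq_single 0 fun n hn => by simp [hn], zero_mul, pow_zero, qPoch,
      range_zero, prod_empty, div_one] at hlim
  · rw [norm_div, norm_div, norm_pow, norm_pow]
    gcongr
    simpa using mul_le_of_le_one_left (norm_nonneg z) (pow_le_one₀ (norm_nonneg q) hq.le)

lemma multipliable_one_sub_mul_pow (hq : ‖q‖ < 1) (z : ℂ) :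
    Multipliable fun j => 1 - z * q ^ j := by
  simpa [sub_eq_add_neg] using
    Complex.multipliable_one_add_of_summable ((summable_geometric_of_norm_lt_one hq).mul_left z).neg

lemma qExp_eq_one_div_qPochInf (hq : ‖q‖ < 1) (hz : ‖z‖ < 1) :
    qExp q z = 1 / qPochInf z q := by
  have hprod : Tendsto (qPoch z q ·) atTop (𝓝 (qPochInf z q)) :=
    (multipliable_one_sub_mul_pow hq z).hasProd.tendsto_prod_nat
  refine eq_one_div_of_mul_eq_one_right (tendsto_nhds_unique ?_ (tendsto_qExp_pow_mul hq hz))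
  exact (hprod.mul_const (qExp q z)).congr (qPoch_mul_qExp hq hz)

end

theorem stmt14_general (q : ℂ) (hq1 : ‖q‖ < 1) {r : ℕ}
    (a : Fin (r + 1) → ℂ) (b : Fin r → ℂ)
    (x y t : ℂ) (hxt : ‖x * t‖ < 1) (hyt : ‖y * t‖ < 1) :
    ∑' n : ℕ, phi a b q x y n * t ^ n / qPoch q q n
      = (1 / qPochInf (y * t) q)
          * ∑' n : ℕ, (mPoch a q n / (qPoch q q n * mPoch b q n)) * (x * t) ^ n := by
  rw [← qExp_eq_one_div_qPochInf hq1 hyt, qExp, mul_comm,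
    tsum_mul_tsum_eq_tsum_sum_range_of_summable_norm (summable_norm_mPoch_div hq1 a b hxt)
      (summable_norm_pow_div_qPoch hq1 hyt)]
  exact tsum_congr fun n => phi_mul_pow_div_qPoch a b x y t (qPoch_ne_zero hq1.le hq1 n)

/-- generating function for `φ_n^{(a,b)}(x,y|q)`. -/
theorem stmt14 (q : ℂ) (hq0 : q ≠ 0) (hq1 : ‖q‖ < 1) {r : ℕ}
    (a : Fin (r + 1) → ℂ) (b : Fin r → ℂ) (hb : ∀ i n, qPoch (b i) q n ≠ 0)
    (x y t : ℂ) (hxt : ‖x * t‖ < 1) (hyt : ‖y * t‖ < 1) :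
    ∑' n : ℕ, phi a b q x y n * t ^ n / qPoch q q n
      = (1 / qPochInf (y * t) q)
          * ∑' n : ℕ, (mPoch a q n / (qPoch q q n * mPoch b q n)) * (x * t) ^ n :=
  stmt14_general q hq1 a b x y t hxt hyt
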